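/- arXiv:1403.5132 — 2 statements merged into one kernel-verified Lean document; each statement's English description precedes it below -/
import Mathlib

section
/- For every natural number r ≥ 0, the Bell number B(2r+1) satisfies B(2r+1) = Σ_{l=0}^{r} l! · (Σ_{k=l+1}^{r+1} S(r+1,k) · C(k−1,l))². (This expresses the dimension of the half-integer partition algebra P_{r+1/2} via its cellular stratification.) -/
/-!
View the `2r+1` points as two copies of an `(r+1)`-set glued at one point `*`. A partition of the
union is determined by its restrictions `P`, `R` to the two copies together with the partial
bijection between those classes of `P` and of `R` that lie in a common block; this bijection must
match the two classes of `*`, so what remains free is a partial bijection between the other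
`k - 1` and `k' - 1` classes. There are `l! C(m,l) C(n,l)` partial bijections with `l` pairs
between sets of sizes `m` and `n`, hence `B(2r+1) = ∑_l l! (∑_P C(k_P - 1, l))²`, and grouping
the `P` by their number `k` of classes gives `S(r+1,k)` of each.
-/

/-- The Bell number: the number of set partitions of an `n`-element set. -/
noncomputable def bell (n : ℕ) : ℕ :=
  Nat.card (Finpartition (Finset.univ : Finset (Fin n)))

/-- The Stirling number of the second kind. -/
noncomputable def stirling (r k : ℕ) : ℕ :=
  Nat.card {P : Finpartition (Finset.univ : Finset (Fin r)) // P.parts.card = k}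

open Finset Function

theorem Nat.card_subtype_ne {α : Type*} [Finite α] (a : α) :
    Nat.card {x // x ≠ a} = Nat.card α - 1 := by
  classical
  have := Fintype.ofFinite α
  simp only [Nat.card_eq_fintype_card, Fintype.card_subtype_compl, Fintype.card_subtype_eq]

namespace PEquiv

variable {α β γ : Type*}

noncomputable def ofInjective {i : α → β} (hi : Injective i) : α ≃. β where
  toFun a := some (i a)
  invFun := partialInv i
  inv a b := (hi.isPartialInv a b).trans Option.some_inj.symm

theorem mem_ofInjective {i : α → β} (hi : Injective i) {a : α} {b : β} :
    b ∈ ofInjective hi a ↔ i a = b :=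
  Option.some_inj

theorem mem_ofInjective_trans_symm {i : α → γ} {j : β → γ} (hi : Injective i) (hj : Injective j)
    {a : α} {b : β} : b ∈ (ofInjective hi).trans (ofInjective hj).symm a ↔ i a = j b := by
  simp only [mem_trans, mem_iff_mem, mem_ofInjective, exists_eq_left']
  exact eq_comm

theorem mem_ofInjective_symm_trans {i : γ → α} {j : γ → β} (hi : Injective i) (hj : Injective j)
    {a : α} {b : β} :
    b ∈ (ofInjective hi).symm.trans (ofInjective hj) a ↔ ∃ c, i c = a ∧ j c = b := by
  simp only [mem_trans, mem_iff_mem, mem_ofInjective]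

instance [Finite α] [Finite β] : Finite (α ≃. β) :=
  Finite.of_injective (fun f : α ≃. β => (f : α → Option β)) DFunLike.coe_injective

section Pointed

variable {a : α} {b : β}

noncomputable def restrictNe (f : α ≃. β) : {x // x ≠ a} ≃. {y // y ≠ b} :=
  (ofInjective Subtype.val_injective).trans (f.trans (ofInjective Subtype.val_injective).symm)

theorem mem_restrictNe {f : α ≃. β} {x : {x // x ≠ a}} {y : {y // y ≠ b}} :
    y ∈ restrictNe f x ↔ y.1 ∈ f x.1 := by
  simp only [restrictNe, mem_trans, mem_iff_mem, mem_ofInjective, exists_eq_left']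
  exact exists_eq_right'

open scoped Classical in
noncomputable def extendNeFun (a : α) (b : β) (g : {x // x ≠ a} → Option {y // y ≠ b}) (x : α) :
    Option β :=
  if hx : x = a then some b else (g ⟨x, hx⟩).map Subtype.val

theorem mem_extendNeFun {g : {x // x ≠ a} → Option {y // y ≠ b}} {x : α} {y : β} :
    y ∈ extendNeFun a b g x ↔
      x = a ∧ y = b ∨ ∃ (hx : x ≠ a) (hy : y ≠ b), ⟨y, hy⟩ ∈ g ⟨x, hx⟩ := by
  by_cases hx : x = a
  · simp [extendNeFun, hx, eq_comm]
  · rw [extendNeFun, dif_neg hx, Option.mem_map]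
    constructor
    · rintro ⟨y, hy, rfl⟩
      exact Or.inr ⟨hx, y.2, hy⟩
    · rintro (⟨hxa, -⟩ | ⟨_, _, h⟩)
      · exact absurd hxa hx
      · exact ⟨_, h, rfl⟩

noncomputable def extendNe (g : {x // x ≠ a} ≃. {y // y ≠ b}) : α ≃. β where
  toFun := extendNeFun a b g
  invFun := extendNeFun b a g.symm
  inv x y := by
    show x ∈ extendNeFun b a g.symm y ↔ y ∈ extendNeFun a b g x
    rw [mem_extendNeFun, mem_extendNeFun]
    simp only [mem_iff_mem]
    tauto

theorem mem_extendNe {g : {x // x ≠ a} ≃. {y // y ≠ b}} {x : α} {y : β} :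
    y ∈ extendNe g x ↔ x = a ∧ y = b ∨ ∃ (hx : x ≠ a) (hy : y ≠ b), ⟨y, hy⟩ ∈ g ⟨x, hx⟩ :=
  mem_extendNeFun

variable (a b) in
noncomputable def subtypeMemEquiv :
    {f : α ≃. β // b ∈ f a} ≃ ({x // x ≠ a} ≃. {y // y ≠ b}) where
  toFun f := restrictNe f.1
  invFun g := ⟨extendNe g, mem_extendNe.mpr (Or.inl ⟨rfl, rfl⟩)⟩
  left_inv f := by
    ext x y
    show y ∈ extendNe _ x ↔ y ∈ f.1 x
    simp only [mem_extendNe, mem_restrictNe]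
    constructor
    · rintro (⟨rfl, rfl⟩ | ⟨_, _, h⟩)
      exacts [f.2, h]
    · intro h
      by_cases hx : x = a
      · subst hx
        exact Or.inl ⟨rfl, Option.mem_unique h f.2⟩
      · exact Or.inr ⟨hx, fun hy => hx (f.1.inj h (hy ▸ f.2)), h⟩
  right_inv g := by
    ext x y
    show y ∈ restrictNe (extendNe g) x ↔ y ∈ g x
    rw [mem_restrictNe, mem_extendNe]
    simp [x.2, y.2]

end Pointed

section Card

variable [Fintype α]

def dom (f : α ≃. β) : Finset α := univ.filter fun x => (f x).isSome

theorem mem_dom {f : α ≃. β} {x : α} : x ∈ f.dom ↔ (f x).isSome := by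
  simp [dom]

noncomputable def domFiberEquiv (s : Finset α) : {f : α ≃. β // f.dom = s} ≃ (s ↪ β) where
  toFun f := ⟨fun x => (f.1 x).get (mem_dom.mp (f.2.symm ▸ x.2)),
    fun x x' h => Subtype.ext <| f.1.inj (Option.get_mem _) <| by
      simp only at h
      rw [h]
      exact Option.get_mem _⟩
  invFun g := ⟨(ofInjective Subtype.val_injective).symm.trans (ofInjective g.injective), by
    ext x
    simp [mem_dom, Option.isSome_iff_exists, ← Option.mem_def, mem_ofInjective_symm_trans]⟩
  left_inv f := by
    ext x y
    dsimp only
    rw [← Option.mem_def, ← Option.mem_def, mem_ofInjective_symm_trans]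
    constructor
    · rintro ⟨c, rfl, rfl⟩
      exact Option.get_mem _
    · intro h
      have hx : x ∈ s := f.2 ▸ mem_dom.mpr (Option.isSome_of_mem h)
      exact ⟨⟨x, hx⟩, rfl, Option.get_of_mem _ h⟩
  right_inv g := by
    ext x
    exact Option.get_of_mem _ ((mem_ofInjective_symm_trans _ _).mpr ⟨x, rfl, rfl⟩)

end Card

open Nat in
theorem card_eq_sum [Finite α] [Finite β] {n : ℕ} (hn : Nat.card α ≤ n) :
    Nat.card (α ≃. β) =
      ∑ l ∈ range (n + 1), l ! * (Nat.card α).choose l * (Nat.card β).choose l := by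
  have := Fintype.ofFinite α
  have := Fintype.ofFinite β
  calc Nat.card (α ≃. β) = ∑ s : Finset α, Nat.card {f : α ≃. β // f.dom = s} := by
        rw [← Nat.card_sigma, Nat.card_congr (Equiv.sigmaFiberEquiv dom)]
    _ = ∑ s : Finset α, (Nat.card β).descFactorial #s := by
        simp_rw [Nat.card_congr (domFiberEquiv _), Nat.card_eq_fintype_card,
          Fintype.card_embedding_eq, Fintype.card_coe]
    _ = ∑ l ∈ range (Nat.card α + 1), (Nat.card α).choose l * (Nat.card β).descFactorial l := by
        rw [← powerset_univ, sum_powerset_apply_card, Finset.card_univ]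
        simp only [Nat.card_eq_fintype_card, smul_eq_mul]
    _ = ∑ l ∈ range (n + 1), l ! * (Nat.card α).choose l * (Nat.card β).choose l := by
        refine sum_subset (range_subset_range.mpr (by omega)) (fun l _ hl => ?_) |>.trans
          (sum_congr rfl fun l _ => ?_)
        · rw [Nat.choose_eq_zero_of_lt (by simpa using hl), zero_mul]
        · rw [descFactorial_eq_factorial_mul_choose]
          ring

open Nat in
theorem card_subtype_mem_eq_sum [Finite α] [Finite β] (a : α) (b : β) {n : ℕ}
    (hn : Nat.card α ≤ n + 1) :
    Nat.card {f : α ≃. β // b ∈ f a} =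
      ∑ l ∈ range (n + 1), l ! * (Nat.card α - 1).choose l * (Nat.card β - 1).choose l := by
  rw [Nat.card_congr (subtypeMemEquiv a b),
    card_eq_sum (n := n) (by rw [Nat.card_subtype_ne]; omega), Nat.card_subtype_ne,
    Nat.card_subtype_ne]

end PEquiv

namespace Finpartition

variable {α : Type*} [Fintype α] [DecidableEq α]

theorem coe_parts_eq_range_part (P : Finpartition (univ : Finset α)) :
    (P.parts : Set (Finset α)) = Set.range P.part := by
  ext t
  constructor
  · intro ht
    obtain ⟨a, -, rfl⟩ := P.part_surjOn ht
    exact ⟨a, rfl⟩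
  · rintro ⟨a, rfl⟩
    exact P.part_mem.mpr (mem_univ a)

theorem card_quotient_ker_part (P : Finpartition (univ : Finset α)) :
    Nat.card (Quotient (Setoid.ker P.part)) = #P.parts := by
  rw [Nat.card_congr (Setoid.quotientKerEquivRange P.part), ← coe_parts_eq_range_part,
    Nat.card_coe_set_eq, Set.ncard_coe_finset]

theorem ker_part_bijective :
    Bijective fun P : Finpartition (univ : Finset α) => Setoid.ker P.part := by
  refine ⟨fun P Q h => ?_, fun s => ?_⟩
  · have hpart : P.part = Q.part := funext fun a => Finset.ext fun b => by
      rw [P.mem_part_iff_part_eq_part (mem_univ b) (mem_univ a),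
        Q.mem_part_iff_part_eq_part (mem_univ b) (mem_univ a)]
      exact Setoid.ext_iff.mp h b a
    ext t
    rw [← mem_coe, coe_parts_eq_range_part, hpart, ← coe_parts_eq_range_part, mem_coe]
  · classical
    refine ⟨ofSetoid s, Setoid.ext fun a b => ?_⟩
    rw [Setoid.ker_def, ← (ofSetoid s).mem_part_iff_part_eq_part (mem_univ a) (mem_univ b),
      mem_part_ofSetoid_iff_rel, s.comm']

noncomputable def equivSetoid : Finpartition (univ : Finset α) ≃ Setoid α :=
  Equiv.ofBijective _ ker_part_bijective

end Finpartition

namespace Setoid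

variable {α β : Type*}

instance [Finite α] : Finite (Setoid α) :=
  Finite.of_injective (fun r : Setoid α => ⇑r) fun _ _ => eq_iff_rel_eq.mpr

noncomputable instance [Finite α] : Fintype (Setoid α) := Fintype.ofFinite _

def comapEquiv (e : α ≃ β) : Setoid β ≃ Setoid α where
  toFun := comap e
  invFun := comap e.symm
  left_inv S := Setoid.ext fun _ _ => by simp [comap_rel]
  right_inv S := Setoid.ext fun _ _ => by simp [comap_rel]

theorem card_quotient_comap (e : α ≃ β) (S : Setoid β) :
    Nat.card (Quotient (S.comap e)) = Nat.card (Quotient S) :=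
  Nat.card_congr (Quotient.congr e fun _ _ => Iff.rfl)

section Counting

variable [Fintype α]

theorem card_eq_bell : Nat.card (Setoid α) = bell (Fintype.card α) := by
  classical
  exact Nat.card_congr (Finpartition.equivSetoid.trans (comapEquiv (Fintype.equivFin α))).symm

theorem card_card_quotient_eq_stirling (k : ℕ) :
    Nat.card {S : Setoid α // Nat.card (Quotient S) = k} = stirling (Fintype.card α) k := by
  classical
  refine Nat.card_congr (Equiv.subtypeEquiv
    (Finpartition.equivSetoid.trans (comapEquiv (Fintype.equivFin α))) fun P => ?_).symm
  rw [Equiv.trans_apply, comapEquiv, Equiv.coe_fn_mk, card_quotient_comap,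
    Finpartition.equivSetoid, Equiv.ofBijective_apply, Finpartition.card_quotient_ker_part]

variable [Nonempty α]

theorem sum_card_quotient {M : Type*} [AddCommMonoid M] (g : ℕ → M) :
    ∑ S : Setoid α, g (Nat.card (Quotient S)) =
      ∑ k ∈ Icc 1 (Fintype.card α), stirling (Fintype.card α) k • g k := by
  classical
  have hk (S : Setoid α) : Nat.card (Quotient S) ∈ Icc 1 (Fintype.card α) := by
    have : Nonempty (Quotient S) := .map (Quotient.mk S) ‹_›
    rw [mem_Icc, Nat.one_le_iff_ne_zero, ← Nat.card_eq_fintype_card]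
    exact ⟨Nat.card_pos.ne', Nat.card_le_card_of_surjective _ Quotient.mk_surjective⟩
  rw [← sum_fiberwise_of_maps_to fun S _ => hk S]
  refine sum_congr rfl fun k _ => ?_
  rw [sum_congr rfl fun S hS => congrArg g (mem_filter.mp hS).2, sum_const,
    ← card_card_quotient_eq_stirling, Nat.card_eq_fintype_card, Fintype.card_subtype]

theorem sum_choose_card_quotient_sub_one (l : ℕ) :
    ∑ S : Setoid α, (Nat.card (Quotient S) - 1).choose l =
      ∑ k ∈ Icc (l + 1) (Fintype.card α), stirling (Fintype.card α) k * (k - 1).choose l := by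
  rw [sum_card_quotient fun k => (k - 1).choose l]
  refine (sum_subset (Icc_subset_Icc_left (by omega)) fun k hk hkl => ?_).symm
  simp only [mem_Icc] at hk hkl
  rw [Nat.choose_eq_zero_of_lt (by omega), smul_zero]

end Counting

def quotientMapOfComapEq {f : α → β} {Q : Setoid β} {P : Setoid α} (h : Q.comap f = P) :
    Quotient P → Quotient Q :=
  Quotient.map' f fun a a' => (Setoid.ext_iff.mp h a a').mpr

theorem quotientMapOfComapEq_injective {f : α → β} {Q : Setoid β} {P : Setoid α}
    (h : Q.comap f = P) : Injective (quotientMapOfComapEq h) :=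
  Quotient.ind₂ fun a a' haa' => Quotient.sound <|
    (Setoid.ext_iff.mp h a a').mp (Quotient.exact (s := Q) (a := f a) (b := f a') haa')

section Sum

variable (P : Setoid α) (R : Setoid β) (f : Quotient P ≃. Quotient R)

-- Each class of `P` goes to its partner class of `R` if it has one, and stays put otherwise.
def sumClassify : α ⊕ β → Quotient R ⊕ Quotient P :=
  Sum.elim (fun a => (f (Quotient.mk P a)).elim (.inr (Quotient.mk P a)) .inl)
    (fun b => .inl (Quotient.mk R b))

def sumGlue : Setoid (α ⊕ β) := ker (sumClassify P R f)

variable {P R f}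

theorem injective_elim_inr_inl :
    Injective fun c => (f c).elim (.inr c) (.inl : _ → Quotient R ⊕ _) := by
  intro c c' h
  rcases hc : f c with _ | d <;> rcases hc' : f c' with _ | d' <;>
    simp only [hc, hc', Option.elim_none, Option.elim_some, Sum.inr.injEq, Sum.inl.injEq,
      reduceCtorEq] at h
  · exact h
  · exact f.inj hc (h ▸ hc')

theorem sumGlue_inl_inl {a a' : α} : sumGlue P R f (.inl a) (.inl a') ↔ P a a' :=
  injective_elim_inr_inl.eq_iff.trans Quotient.eq

theorem sumGlue_inr_inr {b b' : β} : sumGlue P R f (.inr b) (.inr b') ↔ R b b' :=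
  Sum.inl_injective.eq_iff.trans Quotient.eq

theorem sumGlue_inl_inr {a : α} {b : β} :
    sumGlue P R f (.inl a) (.inr b) ↔ Quotient.mk R b ∈ f (Quotient.mk P a) := by
  show (f _).elim _ _ = Sum.inl (Quotient.mk R b) ↔ _
  rcases f (Quotient.mk P a) with _ | d <;> simp [eq_comm]

noncomputable def sumMatching {Q : Setoid (α ⊕ β)} (hP : Q.comap Sum.inl = P)
    (hR : Q.comap Sum.inr = R) : Quotient P ≃. Quotient R :=
  (PEquiv.ofInjective (quotientMapOfComapEq_injective hP)).trans
    (PEquiv.ofInjective (quotientMapOfComapEq_injective hR)).symm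

theorem mem_sumMatching {Q : Setoid (α ⊕ β)} (hP : Q.comap Sum.inl = P)
    (hR : Q.comap Sum.inr = R) {a : α} {b : β} :
    Quotient.mk R b ∈ sumMatching hP hR (Quotient.mk P a) ↔ Q (.inl a) (.inr b) :=
  (PEquiv.mem_ofInjective_trans_symm _ _).trans Quotient.eq

variable (P R) in
noncomputable def sumFiberEquiv :
    {Q : Setoid (α ⊕ β) // Q.comap Sum.inl = P ∧ Q.comap Sum.inr = R} ≃
      (Quotient P ≃. Quotient R) where
  toFun Q := sumMatching Q.2.1 Q.2.2
  invFun f := ⟨sumGlue P R f, Setoid.ext fun _ _ => sumGlue_inl_inl,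
    Setoid.ext fun _ _ => sumGlue_inr_inr⟩
  left_inv Q := by
    have link (a : α) (b : β) :
        sumGlue P R (sumMatching Q.2.1 Q.2.2) (.inl a) (.inr b) ↔ Q.1 (.inl a) (.inr b) :=
      sumGlue_inl_inr.trans (mem_sumMatching _ _)
    refine Subtype.ext (Setoid.ext ?_)
    rintro (a | b) (a' | b')
    · exact sumGlue_inl_inl.trans (Setoid.ext_iff.mp Q.2.1 a a').symm
    · exact link a b'
    · exact (sumGlue _ _ _).comm'.trans ((link a' b).trans Q.1.comm')
    · exact sumGlue_inr_inr.trans (Setoid.ext_iff.mp Q.2.2 b b').symm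
  right_inv f := by
    ext c d
    induction c using Quotient.ind
    induction d using Quotient.ind
    exact (mem_sumMatching _ _).trans sumGlue_inl_inr

variable (α β) in
noncomputable def sumEquiv :
    (Σ p : Setoid α × Setoid β, Quotient p.1 ≃. Quotient p.2) ≃ Setoid (α ⊕ β) :=
  (Equiv.sigmaCongrRight fun p => ((Equiv.subtypeEquivRight fun _ => Prod.ext_iff).trans
    (sumFiberEquiv p.1 p.2)).symm).trans
      (Equiv.sigmaFiberEquiv fun Q : Setoid (α ⊕ β) => (Q.comap Sum.inl, Q.comap Sum.inr))

theorem card_subtype_eq_sum [Finite α] [Finite β] (C : Setoid (α ⊕ β) → Prop) :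
    Nat.card {Q // C Q} = ∑ P : Setoid α, ∑ R : Setoid β,
      Nat.card {f : Quotient P ≃. Quotient R // C (sumGlue P R f)} := by
  let e : {x // C (sumEquiv α β x)} ≃ Σ p : Setoid α × Setoid β,
      {f : Quotient p.1 ≃. Quotient p.2 // C (sumGlue p.1 p.2 f)} :=
    { toFun x := ⟨x.1.1, x.1.2, x.2⟩
      invFun y := ⟨⟨y.1, y.2.1⟩, y.2.2⟩ }
  rw [← Fintype.sum_prod_type', ← Nat.card_sigma, ← Nat.card_congr e,
    Nat.card_congr ((sumEquiv α β).subtypeEquiv fun _ => Iff.rfl)]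

theorem card_rel_inl_inr_eq_sum [Finite α] [Finite β] (a : α) (b : β) :
    Nat.card {Q : Setoid (α ⊕ β) // Q (.inl a) (.inr b)} = ∑ P : Setoid α, ∑ R : Setoid β,
      Nat.card {f : Quotient P ≃. Quotient R // Quotient.mk R b ∈ f (Quotient.mk P a)} := by
  simp_rw [card_subtype_eq_sum, sumGlue_inl_inr]

end Sum

def optionSumEquiv :
    Setoid (Option (α ⊕ β)) ≃ {Q : Setoid (Option α ⊕ Option β) // Q (.inl none) (.inr none)} := by
  let merge : Option α ⊕ Option β → Option (α ⊕ β) := Sum.elim (Option.map .inl) (Option.map .inr)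
  let split : Option (α ⊕ β) → Option α ⊕ Option β :=
    (Option.elim · (.inl none) (Sum.map some some))
  have merge_split (x) : merge (split x) = x := by rcases x with _ | a | b <;> rfl
  exact
  { toFun S := ⟨S.comap merge, S.refl' none⟩
    invFun Q := Q.1.comap split
    left_inv S := Setoid.ext fun x y => by simp only [comap_rel, merge_split]
    right_inv Q := by
      have h (x) : Q.1 x (split (merge x)) := by
        rcases x with (_ | a) | (_ | b)
        exacts [Q.1.refl' _, Q.1.refl' _, Q.1.symm' Q.2, Q.1.refl' _]
      refine Subtype.ext (Setoid.ext fun x y => ?_)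
      simp only [comap_rel]
      exact ⟨fun hxy => Q.1.trans' (Q.1.trans' (h x) hxy) (Q.1.symm' (h y)),
        fun hxy => Q.1.trans' (Q.1.trans' (Q.1.symm' (h x)) hxy) (h y)⟩ }

end Setoid

open Nat in
/-- For every `r ≥ 0`,
`B(2r+1) = Σ_{l=0}^{r} l! · (Σ_{k=l+1}^{r+1} S(r+1,k) · C(k−1,l))²`. -/
theorem bell_odd_eq_sum_layers (r : ℕ) :
    bell (2 * r + 1) =
      ∑ l ∈ Finset.range (r + 1),
        Nat.factorial l *
          (∑ k ∈ Finset.Icc (l + 1) (r + 1),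
            stirling (r + 1) k * Nat.choose (k - 1) l) ^ 2 := by
  have hcard (P : Setoid (Option (Fin r))) : Nat.card (Quotient P) ≤ r + 1 := by
    simpa using Nat.card_le_card_of_surjective _ (Quotient.mk_surjective (s := P))
  calc bell (2 * r + 1) = Nat.card (Setoid (Option (Fin r ⊕ Fin r))) := by
        rw [Setoid.card_eq_bell, Fintype.card_option, Fintype.card_sum, Fintype.card_fin, two_mul]
    _ = Nat.card {Q : Setoid (Option (Fin r) ⊕ Option (Fin r)) // Q (.inl none) (.inr none)} :=
        Nat.card_congr Setoid.optionSumEquiv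
    _ = ∑ P : Setoid (Option (Fin r)), ∑ R : Setoid (Option (Fin r)), ∑ l ∈ range (r + 1),
          l ! * (Nat.card (Quotient P) - 1).choose l * (Nat.card (Quotient R) - 1).choose l := by
        rw [Setoid.card_rel_inl_inr_eq_sum]
        exact sum_congr rfl fun P _ => sum_congr rfl fun R _ =>
          PEquiv.card_subtype_mem_eq_sum _ _ (hcard P)
    _ = ∑ l ∈ range (r + 1),
          l ! * (∑ P : Setoid (Option (Fin r)), (Nat.card (Quotient P) - 1).choose l) ^ 2 := by
        simp only [sq, mul_sum, sum_mul, ← mul_assoc]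
        rw [sum_comm]
        exact (sum_congr rfl fun _ _ => sum_comm).trans sum_comm
    _ = _ := by
        refine sum_congr rfl fun l _ => ?_
        rw [Setoid.sum_choose_card_quotient_sub_one, Fintype.card_option, Fintype.card_fin]
end

section
/- Fix an integer δ and a natural number r ≥ 1, with vacillating tableaux and weights defined as follows: a vacillating tableau of shape λ and length r is a sequence (t_0 = ∅, t_1, …, t_{2r−1} = λ) of partitions adding a box or staying at odd steps and removing a box or staying at even steps; its weight w ∈ ℤ^{2r−1} has w_m = c(ε) (box ε added) or δ − |t_m| (no change) at odd m, and w_m = δ − c(ε) (box ε removed) or |t_m| (no change) at even m. Theorem: Let μ be a partition of r and λ a partition with |λ| ≤ r. Then for every vacillating tableau u of shape μ there is at most one vacillating tableau t of shape λ with the same weight vector as u. -/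
/-- A partition: a weakly decreasing, eventually zero sequence of naturals. -/
def IsPartition (l : ℕ → ℕ) : Prop :=
  Antitone l ∧ ∃ N, ∀ i, N ≤ i → l i = 0

/-- The result of adding a box to row `i` (0-indexed). -/
def addRow (l : ℕ → ℕ) (i : ℕ) : ℕ → ℕ := Function.update l i (l i + 1)

/-- The number of boxes of a partition. -/
noncomputable def psize (l : ℕ → ℕ) : ℕ := Set.ncard {p : ℕ × ℕ | p.2 < l p.1}

/-- A vacillating tableau of shape `lam` and length `r`: a sequence
`t 0 = ∅, t 1, …, t (2r−1) = lam` of partitions such that at each odd index a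
box is added or nothing changes, and at each even index `≥ 2` a box is removed
or nothing changes.  (Entries of the sequence beyond index `2r−1` are
normalized to the empty partition.) -/
def IsVacTab (r : ℕ) (t : ℕ → ℕ → ℕ) (lam : ℕ → ℕ) : Prop :=
  (∀ m, m < 2 * r → IsPartition (t m)) ∧
  t 0 = (fun _ => 0) ∧
  t (2 * r - 1) = lam ∧
  (∀ m, m < 2 * r → m % 2 = 1 →
    (t m = t (m - 1) ∨ ∃ i, t m = addRow (t (m - 1)) i)) ∧
  (∀ m, 2 ≤ m → m < 2 * r → m % 2 = 0 →
    (t m = t (m - 1) ∨ ∃ i, t (m - 1) = addRow (t m) i)) ∧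
  (∀ m, 2 * r ≤ m → t m = fun _ => 0)

/-- `w` is the weight vector of the vacillating tableau `t` (with parameter `δ`):
at an odd step `m`, `w m` is the content of the added box, or `δ − |t m|` if
nothing changed; at an even step `m ≥ 2`, `w m` is `δ` minus the content of the
removed box, or `|t m|` if nothing changed. -/
def HasWeight (δ : ℤ) (r : ℕ) (t : ℕ → ℕ → ℕ) (w : ℕ → ℤ) : Prop :=
  ∀ m, 1 ≤ m → m < 2 * r →
    (m % 2 = 1 →
      ((t m = t (m - 1) ∧ w m = δ - psize (t m)) ∨
        ∃ i, t m = addRow (t (m - 1)) i ∧ w m = (t (m - 1) i : ℤ) - i)) ∧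
    (m % 2 = 0 →
      ((t m = t (m - 1) ∧ w m = (psize (t m) : ℤ)) ∨
        ∃ i, t (m - 1) = addRow (t m) i ∧ w m = δ - ((t m i : ℤ) - i)))

-- auxiliary lemmas

lemma addRow_self (p : ℕ → ℕ) (i : ℕ) : addRow p i i = p i + 1 := by
  simp [addRow]

lemma addRow_of_ne (p : ℕ → ℕ) {i j : ℕ} (h : j ≠ i) : addRow p i j = p j := by
  simp [addRow, Function.update, h]

lemma addRow_left_cancel {p q : ℕ → ℕ} {i : ℕ} (h : addRow p i = addRow q i) : p = q := by
  funext j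
  by_cases hj : j = i
  · subst hj
    have := congrFun h j
    rw [addRow_self, addRow_self] at this
    omega
  · have := congrFun h j
    rwa [addRow_of_ne _ hj, addRow_of_ne _ hj] at this

lemma contentInj {p : ℕ → ℕ} (hp : IsPartition p) {a b : ℕ}
    (h : (p a : ℤ) - a = (p b : ℤ) - b) : a = b := by
  rcases Nat.lt_trichotomy a b with h' | h' | h'
  · have := hp.1 h'.le
    omega
  · exact h'
  · have := hp.1 h'.le
    omega

lemma cellsFinite {p : ℕ → ℕ} (hp : IsPartition p) :
    {q : ℕ × ℕ | q.2 < p q.1}.Finite := by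
  obtain ⟨hA, N, hN⟩ := hp
  apply Set.Finite.subset ((Set.finite_Iio N).prod (Set.finite_Iio (p 0)))
  rintro ⟨a, b⟩ hq
  simp only [Set.mem_setOf_eq] at hq
  constructor
  · simp only [Set.mem_Iio]
    by_contra hc
    rw [hN a (by omega)] at hq; omega
  · simp only [Set.mem_Iio]
    have := hA (Nat.zero_le a)
    omega

lemma psize_addRow {p : ℕ → ℕ} (hp : IsPartition p) (i : ℕ) :
    psize (addRow p i) = psize p + 1 := by
  have hset : {q : ℕ × ℕ | q.2 < addRow p i q.1}
      = insert (i, p i) {q : ℕ × ℕ | q.2 < p q.1} := by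
    ext ⟨a, b⟩
    simp only [Set.mem_setOf_eq, Set.mem_insert_iff, Prod.mk.injEq]
    by_cases h : a = i
    · subst h
      rw [addRow_self]
      constructor
      · intro hh
        rcases Nat.lt_or_ge b (p a) with h1 | h1
        · right; exact h1
        · left; exact ⟨rfl, by omega⟩
      · rintro (⟨-, h2⟩ | h2) <;> omega
    · rw [addRow_of_ne _ h]
      constructor
      · intro hh; right; exact hh
      · rintro (⟨h1, -⟩ | h2)
        · exact absurd h1 h
        · exact h2
  rw [psize, hset, Set.ncard_insert_of_notMem (by simp) (cellsFinite hp)]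
  rfl

lemma psize_zero : psize (fun _ => 0) = 0 := by
  have : {q : ℕ × ℕ | q.2 < (fun _ => 0) q.1} = (∅ : Set (ℕ × ℕ)) := by
    ext q; simp
  rw [psize, this, Set.ncard_empty]

/-- a partition cannot have a removable box and an addable box of the same content -/
lemma clash {q y : ℕ → ℕ} (hq : IsPartition q) (hy : IsPartition y) {i j : ℕ}
    (hqy : q = addRow y i) (hj : IsPartition (addRow q j))
    (hc : (q j : ℤ) - j = (y i : ℤ) - i) : False := by
  have hqi : q i = y i + 1 := by rw [hqy, addRow_self]
  have hij : i < j := by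
    rcases Nat.lt_trichotomy j i with h' | h' | h'
    · have := hq.1 h'.le
      omega
    · rw [h'] at hc; omega
    · exact h'
  rcases Nat.lt_or_ge (i + 1) j with hj2 | hj2
  · -- j ≥ i + 2
    have h1 : addRow q j (j - 1) = q (j - 1) := addRow_of_ne _ (by omega)
    have h2 : addRow q j j = q j + 1 := addRow_self _ _
    have h3 : q j + 1 ≤ q (j - 1) := by
      have := hj.1 (show j - 1 ≤ j by omega)
      rw [h1, h2] at this; omega
    have h4 : q (j - 1) ≤ q i := hq.1 (by omega)
    omega
  · -- j = i + 1
    have hji : j = i + 1 := by omega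
    subst hji
    have h1 : q (i + 1) = y (i + 1) := by rw [hqy, addRow_of_ne _ (by omega)]
    have h2 : y (i + 1) ≤ y i := hy.1 (by omega)
    omega

/-- size bound: a path has at most ⌈m/2⌉ boxes at step m -/
lemma sizeBound {r : ℕ} {x : ℕ → ℕ → ℕ} {lx : ℕ → ℕ} (hx : IsVacTab r x lx) :
    ∀ m, m < 2 * r → psize (x m) ≤ (m + 1) / 2 := by
  intro m
  induction m with
  | zero => intro _; rw [hx.2.1, psize_zero]
  | succ n ih =>
    intro hn
    have hn' : n < 2 * r := by omega
    have hih := ih hn'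
    rcases Nat.even_or_odd (n + 1) with he | ho
    · have hpar : (n + 1) % 2 = 0 := Nat.even_iff.mp he
      have hmove := hx.2.2.2.2.1 (n + 1) (by omega) hn hpar
      rw [Nat.add_sub_cancel] at hmove
      rcases hmove with h | ⟨b, h⟩
      · rw [h]; omega
      · have : psize (x n) = psize (x (n + 1)) + 1 := by
          rw [h, psize_addRow (hx.1 (n + 1) hn)]
        omega
    · have hpar : (n + 1) % 2 = 1 := Nat.odd_iff.mp ho
      have hmove := hx.2.2.2.1 (n + 1) hn hpar
      rw [Nat.add_sub_cancel] at hmove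
      rcases hmove with h | ⟨b, h⟩
      · rw [h]; omega
      · have : psize (x (n + 1)) = psize (x n) + 1 := by
          rw [h, psize_addRow (hx.1 n hn')]
        omega

section UFacts
variable {δ : ℤ} {r : ℕ} {u : ℕ → ℕ → ℕ} {mu : ℕ → ℕ} {w : ℕ → ℤ}

/-- the sizes of the maximal path -/
lemma uSize (hu : IsVacTab r u mu) (hmur : psize mu = r) :
    ∀ m, m < 2 * r → psize (u m) = (m + 1) / 2 := by
  have upper := sizeBound hu
  have lower : ∀ k m, m + k = 2 * r - 1 → (m + 1) / 2 ≤ psize (u m) := by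
    intro k
    induction k with
    | zero =>
      intro m hm
      have : m = 2 * r - 1 := by omega
      subst this
      rw [hu.2.2.1, hmur]
      omega
    | succ k ih =>
      intro m hm
      have hr1 : 1 ≤ r := by omega
      have hm1 : m + 1 < 2 * r := by omega
      have hprev : (m + 2) / 2 ≤ psize (u (m + 1)) := ih (m + 1) (by omega)
      rcases Nat.even_or_odd (m + 1) with he | ho
      · have hpar : (m + 1) % 2 = 0 := Nat.even_iff.mp he
        have hmove := hu.2.2.2.2.1 (m + 1) (by omega) hm1 hpar
        rw [Nat.add_sub_cancel] at hmove
        rcases hmove with h | ⟨b, h⟩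
        · rw [← h]; omega
        · have : psize (u m) = psize (u (m + 1)) + 1 := by
            rw [h, psize_addRow (hu.1 (m + 1) hm1)]
          omega
      · have hpar : (m + 1) % 2 = 1 := Nat.odd_iff.mp ho
        have hmove := hu.2.2.2.1 (m + 1) hm1 hpar
        rw [Nat.add_sub_cancel] at hmove
        rcases hmove with h | ⟨b, h⟩
        · rw [← h]; omega
        · have : psize (u (m + 1)) = psize (u m) + 1 := by
            rw [h, psize_addRow (hu.1 m (by omega))]
          omega
  intro m hm
  have := lower (2 * r - 1 - m) m (by omega)
  have := upper m hm
  omega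

/-- at even steps the weight is m/2 -/
lemma wEven (hu : IsVacTab r u mu) (huw : HasWeight δ r u w) (hmur : psize mu = r) :
    ∀ m, 2 ≤ m → m < 2 * r → m % 2 = 0 → w m = ((m / 2 : ℕ) : ℤ) := by
  intro m h2 hm hpar
  have hus := uSize hu hmur
  have hmove := (huw m (by omega) hm).2 hpar
  rcases hmove with ⟨-, h⟩ | ⟨b, hb, -⟩
  · rw [h, hus m hm]
    congr 1
    omega
  · exfalso
    have h1 : psize (u (m - 1)) = psize (u m) + 1 := by
      rw [hb, psize_addRow (hu.1 m hm)]
    rw [hus m hm, hus (m - 1) (by omega)] at h1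
    omega

/-- at odd steps u adds a box -/
lemma uOdd (hu : IsVacTab r u mu) (huw : HasWeight δ r u w) (hmur : psize mu = r) :
    ∀ m, m < 2 * r → m % 2 = 1 →
      ∃ j, u m = addRow (u (m - 1)) j ∧ w m = (u (m - 1) j : ℤ) - j := by
  intro m hm hpar
  have hus := uSize hu hmur
  have hmove := (huw m (by omega) hm).1 hpar
  rcases hmove with ⟨h, -⟩ | hh
  · exfalso
    have h1 : psize (u m) = psize (u (m - 1)) := by rw [h]
    rw [hus m hm, hus (m - 1) (by omega)] at h1
    omega
  · exact hh

end UFacts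

/-- Single-row difference invariant: `x` and `y` agree except in row `i`, where
`x` is longer, and the "bottom content" is pinned to `δ - |x| + (n % 2)`. -/
def SR (δ : ℤ) (x y : ℕ → ℕ → ℕ) (n i : ℕ) : Prop :=
  (∀ j, j ≠ i → x n j = y n j) ∧ y n i < x n i ∧
  ((y n i : ℤ) - i = δ - (psize (x n) : ℤ) + ((n % 2 : ℕ) : ℤ)) ∧
  psize (x n) + y n i = psize (y n) + x n i

def PP (δ : ℤ) (x y : ℕ → ℕ → ℕ) (n : ℕ) : Prop :=
  x n = y n ∨ (∃ i, SR δ x y n i) ∨ (∃ i, SR δ y x n i)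

lemma stepSR {δ : ℤ} {w : ℕ → ℤ} {r : ℕ} {x y : ℕ → ℕ → ℕ} {lx ly : ℕ → ℕ}
    (hx : IsVacTab r x lx) (hxw : HasWeight δ r x w)
    (hy : IsVacTab r y ly) (hyw : HasWeight δ r y w)
    (hweven : ∀ m, 2 ≤ m → m < 2 * r → m % 2 = 0 → w m = ((m / 2 : ℕ) : ℤ))
    {n i : ℕ} (hn : n + 1 < 2 * r) (hsr : SR δ x y n i) :
    x (n + 1) = y (n + 1) ∨ ∃ i', SR δ x y (n + 1) i' := by
  obtain ⟨A1, A2, A3, A4⟩ := hsr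
  have hpx : IsPartition (x n) := hx.1 n (by omega)
  have hpy : IsPartition (y n) := hy.1 n (by omega)
  have hpx1 : IsPartition (x (n + 1)) := hx.1 _ hn
  have hpy1 : IsPartition (y (n + 1)) := hy.1 _ hn
  rcases Nat.even_or_odd (n + 1) with he | ho
  · -- EVEN step n+1
    have hpar : (n + 1) % 2 = 0 := Nat.even_iff.mp he
    have hnpar : n % 2 = 1 := by omega
    have hbx : psize (x n) ≤ (n + 1) / 2 := sizeBound hx n (by omega)
    have hw2 : w (n + 1) = (((n + 1) / 2 : ℕ) : ℤ) := hweven (n + 1) (by omega) hn hpar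
    have hX := (hxw (n + 1) (by omega) hn).2 hpar
    have hY := (hyw (n + 1) (by omega) hn).2 hpar
    rw [Nat.add_sub_cancel] at hX hY
    rcases hX with ⟨hxe, hxwe⟩ | ⟨a, hxa, hxwa⟩ <;>
      rcases hY with ⟨hye, hywe⟩ | ⟨b, hyb, hywb⟩
    · -- stay / stay
      exfalso
      rw [hxe] at hxwe
      rw [hye] at hywe
      omega
    · -- X stays, Y removes b
      rw [hxe] at hxwe
      have hvb : y n b = y (n + 1) b + 1 := by rw [hyb, addRow_self]
      have hvj : ∀ j, j ≠ b → y n j = y (n + 1) j := fun j hj => by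
        rw [hyb, addRow_of_ne _ hj]
      have hszy : psize (y n) = psize (y (n + 1)) + 1 := by
        rw [hyb, psize_addRow hpy1]
      have hcc : (y n b : ℤ) - b = (y n i : ℤ) - i := by omega
      have hbi : b = i := contentInj hpy hcc
      subst hbi
      have hpxe : psize (x (n + 1)) = psize (x n) := by rw [hxe]
      have hxei : ∀ j, x (n + 1) j = x n j := fun j => by rw [hxe]
      refine Or.inr ⟨b, ?_, ?_, ?_, ?_⟩
      · intro j hj
        rw [hxei j, ← hvj j hj]
        exact A1 j hj
      · have := hxei b
        omega
      · rw [hpar]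
        push_cast
        omega
      · have := hxei b
        omega
    · -- X removes a, Y stays
      exfalso
      rw [hye] at hywe
      have hpye : psize (y (n + 1)) = psize (y n) := by rw [hye]
      omega
    · -- X removes a, Y removes b
      have hvxa : x n a = x (n + 1) a + 1 := by rw [hxa, addRow_self]
      have hvxj : ∀ j, j ≠ a → x n j = x (n + 1) j := fun j hj => by
        rw [hxa, addRow_of_ne _ hj]
      have hszx : psize (x n) = psize (x (n + 1)) + 1 := by
        rw [hxa, psize_addRow hpx1]
      have hvyb : y n b = y (n + 1) b + 1 := by rw [hyb, addRow_self]
      have hvyj : ∀ j, j ≠ b → y n j = y (n + 1) j := fun j hj => by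
        rw [hyb, addRow_of_ne _ hj]
      have hszy : psize (y n) = psize (y (n + 1)) + 1 := by
        rw [hyb, psize_addRow hpy1]
      by_cases hbi : b = i
      · exfalso
        subst hbi
        by_cases hai : a = b
        · subst hai
          omega
        · have hA := A1 a hai
          have hcc : (y n a : ℤ) - a = (y n b : ℤ) - b := by omega
          exact hai (contentInj hpy hcc)
      · have hyb' : y n b = x n b := (A1 b hbi).symm
        have hcc : (x n a : ℤ) - a = (x n b : ℤ) - b := by omega
        have hab : a = b := contentInj hpx hcc
        subst hab
        refine Or.inr ⟨i, ?_, ?_, ?_, ?_⟩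
        · intro j hj
          by_cases hja : j = a
          · subst hja
            omega
          · rw [← hvxj j hja, ← hvyj j hja]
            exact A1 j hj
        · have h1 := hvxj i (fun h => hbi h.symm)
          have h2 := hvyj i (fun h => hbi h.symm)
          omega
        · have h2 := hvyj i (fun h => hbi h.symm)
          rw [hpar]
          push_cast
          omega
        · have h1 := hvxj i (fun h => hbi h.symm)
          have h2 := hvyj i (fun h => hbi h.symm)
          omega
  · -- ODD step n+1
    have hpar : (n + 1) % 2 = 1 := Nat.odd_iff.mp ho
    have hnpar : n % 2 = 0 := by omega
    have hX := (hxw (n + 1) (by omega) hn).1 hpar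
    have hY := (hyw (n + 1) (by omega) hn).1 hpar
    rw [Nat.add_sub_cancel] at hX hY
    rcases hX with ⟨hxe, hxwo⟩ | ⟨a, hxa, hxwa⟩ <;>
      rcases hY with ⟨hye, hywo⟩ | ⟨b, hya, hywb⟩
    · -- stay / stay
      exfalso
      rw [hxe] at hxwo
      rw [hye] at hywo
      have hpxe : psize (x (n + 1)) = psize (x n) := by rw [hxe]
      have hpye : psize (y (n + 1)) = psize (y n) := by rw [hye]
      omega
    · -- X stays, Y adds b
      rw [hxe] at hxwo
      have hpxe : psize (x (n + 1)) = psize (x n) := by rw [hxe]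
      have hvyb : y (n + 1) b = y n b + 1 := by rw [hya, addRow_self]
      have hvyj : ∀ j, j ≠ b → y (n + 1) j = y n j := fun j hj => by
        rw [hya, addRow_of_ne _ hj]
      have hszy : psize (y (n + 1)) = psize (y n) + 1 := by
        rw [hya, psize_addRow hpy]
      have hcc : (y n b : ℤ) - b = (y n i : ℤ) - i := by omega
      have hbi : b = i := contentInj hpy hcc
      subst hbi
      have hxei : ∀ j, x (n + 1) j = x n j := fun j => by rw [hxe]
      by_cases hmerge : x n b = y n b + 1
      · left
        funext j
        by_cases hj : j = b
        · subst hj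
          have := hxei j
          omega
        · rw [hxei j, hvyj j hj]
          exact A1 j hj
      · refine Or.inr ⟨b, ?_, ?_, ?_, ?_⟩
        · intro j hj
          rw [hxei j, hvyj j hj]
          exact A1 j hj
        · have := hxei b
          omega
        · rw [hpar]
          push_cast
          omega
        · have := hxei b
          omega
    · -- X adds a, Y stays
      rw [hye] at hywo
      have hpye : psize (y (n + 1)) = psize (y n) := by rw [hye]
      have hvxa : x (n + 1) a = x n a + 1 := by rw [hxa, addRow_self]
      have hvxj : ∀ j, j ≠ a → x (n + 1) j = x n j := fun j hj => by
        rw [hxa, addRow_of_ne _ hj]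
      have hszx : psize (x (n + 1)) = psize (x n) + 1 := by
        rw [hxa, psize_addRow hpx]
      have hcc : (x n a : ℤ) - a = (x n i : ℤ) - i := by omega
      have hai : a = i := contentInj hpx hcc
      subst hai
      have hyei : ∀ j, y (n + 1) j = y n j := fun j => by rw [hye]
      refine Or.inr ⟨a, ?_, ?_, ?_, ?_⟩
      · intro j hj
        rw [hvxj j hj, hyei j]
        exact A1 j hj
      · have := hyei a
        omega
      · have := hyei a
        rw [hpar]
        push_cast
        omega
      · have := hyei a
        omega
    · -- X adds a, Y adds b
      have hvxa : x (n + 1) a = x n a + 1 := by rw [hxa, addRow_self]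
      have hvxj : ∀ j, j ≠ a → x (n + 1) j = x n j := fun j hj => by
        rw [hxa, addRow_of_ne _ hj]
      have hszx : psize (x (n + 1)) = psize (x n) + 1 := by
        rw [hxa, psize_addRow hpx]
      have hvyb : y (n + 1) b = y n b + 1 := by rw [hya, addRow_self]
      have hvyj : ∀ j, j ≠ b → y (n + 1) j = y n j := fun j hj => by
        rw [hya, addRow_of_ne _ hj]
      have hszy : psize (y (n + 1)) = psize (y n) + 1 := by
        rw [hya, psize_addRow hpy]
      by_cases hbi : b = i
      · exfalso
        subst hbi
        by_cases hai : a = b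
        · subst hai
          omega
        · have hA := A1 a hai
          have hcc : (y n a : ℤ) - a = (y n b : ℤ) - b := by omega
          exact hai (contentInj hpy hcc)
      · have hyb' : y n b = x n b := (A1 b hbi).symm
        have hcc : (x n a : ℤ) - a = (x n b : ℤ) - b := by omega
        have hab : a = b := contentInj hpx hcc
        subst hab
        refine Or.inr ⟨i, ?_, ?_, ?_, ?_⟩
        · intro j hj
          by_cases hja : j = a
          · subst hja
            omega
          · rw [hvxj j hja, hvyj j hja]
            exact A1 j hj
        · have h1 := hvxj i (fun h => hbi h.symm)
          have h2 := hvyj i (fun h => hbi h.symm)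
          omega
        · have h2 := hvyj i (fun h => hbi h.symm)
          rw [hpar]
          push_cast
          omega
        · have h1 := hvxj i (fun h => hbi h.symm)
          have h2 := hvyj i (fun h => hbi h.symm)
          omega

lemma stepEq {δ : ℤ} {w : ℕ → ℤ} {r : ℕ} {x y : ℕ → ℕ → ℕ} {lx ly : ℕ → ℕ}
    (hx : IsVacTab r x lx) (hxw : HasWeight δ r x w)
    (hy : IsVacTab r y ly) (hyw : HasWeight δ r y w)
    {n : ℕ} (hn : n + 1 < 2 * r) (heq : x n = y n) :
    PP δ x y (n + 1) := by
  have hpx : IsPartition (x n) := hx.1 n (by omega)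
  have hpx1 : IsPartition (x (n + 1)) := hx.1 _ hn
  have hpy1 : IsPartition (y (n + 1)) := hy.1 _ hn
  have hpeq : psize (x n) = psize (y n) := by rw [heq]
  have hptw : ∀ j, x n j = y n j := fun j => by rw [heq]
  rcases Nat.even_or_odd (n + 1) with he | ho
  · -- EVEN step n+1
    have hpar : (n + 1) % 2 = 0 := Nat.even_iff.mp he
    have hX := (hxw (n + 1) (by omega) hn).2 hpar
    have hY := (hyw (n + 1) (by omega) hn).2 hpar
    rw [Nat.add_sub_cancel] at hX hY
    rcases hX with ⟨hxe, hxwe⟩ | ⟨a, hxa, hxwa⟩ <;>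
      rcases hY with ⟨hye, hywe⟩ | ⟨b, hyb, hywb⟩
    · left; rw [hxe, hye, heq]
    · -- X stays, Y removes b : SR x y (n+1) b
      rw [hxe] at hxwe
      have hvb : y n b = y (n + 1) b + 1 := by rw [hyb, addRow_self]
      have hvj : ∀ j, j ≠ b → y n j = y (n + 1) j := fun j hj => by
        rw [hyb, addRow_of_ne _ hj]
      have hszy : psize (y n) = psize (y (n + 1)) + 1 := by
        rw [hyb, psize_addRow hpy1]
      have hpxe : psize (x (n + 1)) = psize (x n) := by rw [hxe]
      have hxei : ∀ j, x (n + 1) j = x n j := fun j => by rw [hxe]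
      refine Or.inr (Or.inl ⟨b, ?_, ?_, ?_, ?_⟩)
      · intro j hj
        rw [hxei j, hptw j, hvj j hj]
      · have h1 := hxei b
        have h2 := hptw b
        omega
      · have h2 := hptw b
        rw [hpar]
        push_cast
        omega
      · have h1 := hxei b
        have h2 := hptw b
        omega
    · -- X removes a, Y stays : SR y x (n+1) a
      rw [hye] at hywe
      have hva : x n a = x (n + 1) a + 1 := by rw [hxa, addRow_self]
      have hvj : ∀ j, j ≠ a → x n j = x (n + 1) j := fun j hj => by
        rw [hxa, addRow_of_ne _ hj]
      have hszx : psize (x n) = psize (x (n + 1)) + 1 := by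
        rw [hxa, psize_addRow hpx1]
      have hpye : psize (y (n + 1)) = psize (y n) := by rw [hye]
      have hyei : ∀ j, y (n + 1) j = y n j := fun j => by rw [hye]
      refine Or.inr (Or.inr ⟨a, ?_, ?_, ?_, ?_⟩)
      · intro j hj
        rw [hyei j, ← hptw j, hvj j hj]
      · have h1 := hyei a
        have h2 := hptw a
        omega
      · have h1 := hyei a
        have h2 := hptw a
        rw [hpar]
        push_cast
        omega
      · have h1 := hyei a
        have h2 := hptw a
        omega
    · -- both remove
      have hvxa : x n a = x (n + 1) a + 1 := by rw [hxa, addRow_self]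
      have hvyb : y n b = y (n + 1) b + 1 := by rw [hyb, addRow_self]
      have hA := hptw a
      have hB := hptw b
      have hcc : (x n a : ℤ) - a = (x n b : ℤ) - b := by omega
      have hab : a = b := contentInj hpx hcc
      subst hab
      left
      have : addRow (x (n + 1)) a = addRow (y (n + 1)) a := by
        rw [← hxa, ← hyb, heq]
      exact addRow_left_cancel this
  · -- ODD step n+1
    have hpar : (n + 1) % 2 = 1 := Nat.odd_iff.mp ho
    have hX := (hxw (n + 1) (by omega) hn).1 hpar
    have hY := (hyw (n + 1) (by omega) hn).1 hpar
    rw [Nat.add_sub_cancel] at hX hY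
    rcases hX with ⟨hxe, hxwo⟩ | ⟨a, hxa, hxwa⟩ <;>
      rcases hY with ⟨hye, hywo⟩ | ⟨b, hya, hywb⟩
    · left; rw [hxe, hye, heq]
    · -- X stays, Y adds b : SR y x (n+1) b
      rw [hxe] at hxwo
      have hpxe : psize (x (n + 1)) = psize (x n) := by rw [hxe]
      have hxei : ∀ j, x (n + 1) j = x n j := fun j => by rw [hxe]
      have hvyb : y (n + 1) b = y n b + 1 := by rw [hya, addRow_self]
      have hvyj : ∀ j, j ≠ b → y (n + 1) j = y n j := fun j hj => by
        rw [hya, addRow_of_ne _ hj]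
      have hszy : psize (y (n + 1)) = psize (y n) + 1 := by
        rw [hya, psize_addRow (hy.1 n (by omega))]
      refine Or.inr (Or.inr ⟨b, ?_, ?_, ?_, ?_⟩)
      · intro j hj
        rw [hvyj j hj, hxei j, hptw j]
      · have h1 := hxei b
        have h2 := hptw b
        omega
      · have h1 := hxei b
        have h2 := hptw b
        rw [hpar]
        push_cast
        omega
      · have h1 := hxei b
        have h2 := hptw b
        omega
    · -- X adds a, Y stays : SR x y (n+1) a
      rw [hye] at hywo
      have hpye : psize (y (n + 1)) = psize (y n) := by rw [hye]
      have hyei : ∀ j, y (n + 1) j = y n j := fun j => by rw [hye]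
      have hvxa : x (n + 1) a = x n a + 1 := by rw [hxa, addRow_self]
      have hvxj : ∀ j, j ≠ a → x (n + 1) j = x n j := fun j hj => by
        rw [hxa, addRow_of_ne _ hj]
      have hszx : psize (x (n + 1)) = psize (x n) + 1 := by
        rw [hxa, psize_addRow hpx]
      refine Or.inr (Or.inl ⟨a, ?_, ?_, ?_, ?_⟩)
      · intro j hj
        rw [hvxj j hj, hyei j, ← hptw j]
      · have h1 := hyei a
        have h2 := hptw a
        omega
      · have h1 := hyei a
        have h2 := hptw a
        rw [hpar]
        push_cast
        omega
      · have h1 := hyei a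
        have h2 := hptw a
        omega
    · -- both add
      have hA := hptw a
      have hB := hptw b
      have hcc : (x n a : ℤ) - a = (x n b : ℤ) - b := by omega
      have hab : a = b := contentInj hpx hcc
      subst hab
      left
      rw [hxa, hya, heq]

lemma invP {δ : ℤ} {w : ℕ → ℤ} {r : ℕ} {x y : ℕ → ℕ → ℕ} {lx ly : ℕ → ℕ}
    (hx : IsVacTab r x lx) (hxw : HasWeight δ r x w)
    (hy : IsVacTab r y ly) (hyw : HasWeight δ r y w)
    (hweven : ∀ m, 2 ≤ m → m < 2 * r → m % 2 = 0 → w m = ((m / 2 : ℕ) : ℤ)) :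
    ∀ n, n < 2 * r → PP δ x y n := by
  intro n
  induction n with
  | zero => intro _; left; rw [hx.2.1, hy.2.1]
  | succ n ih =>
    intro hn
    rcases ih (by omega) with heq | ⟨i, hsr⟩ | ⟨i, hsr⟩
    · exact stepEq hx hxw hy hyw hn heq
    · rcases stepSR hx hxw hy hyw hweven hn hsr with h | ⟨i', h⟩
      · exact Or.inl h
      · exact Or.inr (Or.inl ⟨i', h⟩)
    · rcases stepSR hy hyw hx hxw hweven hn hsr with h | ⟨i', h⟩
      · exact Or.inl h.symm
      · exact Or.inr (Or.inr ⟨i', h⟩)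

/-- the crux: two same-weight paths cannot merge at an odd step -/
lemma mergeOddFalse {δ : ℤ} {w : ℕ → ℤ} {r : ℕ} {u x y : ℕ → ℕ → ℕ}
    {mu lx ly : ℕ → ℕ}
    (hu : IsVacTab r u mu) (huw : HasWeight δ r u w) (hmur : psize mu = r)
    (hx : IsVacTab r x lx) (hxw : HasWeight δ r x w)
    (hy : IsVacTab r y ly) (hyw : HasWeight δ r y w)
    {n : ℕ} (hn : n + 1 < 2 * r) (hpar : (n + 1) % 2 = 1)
    (hne : x n ≠ y n)
    (hxe : x (n + 1) = x n) (hxwo : w (n + 1) = δ - psize (x (n + 1)))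
    {a : ℕ} (hya : y (n + 1) = addRow (y n) a) (hywa : w (n + 1) = (y n a : ℤ) - a)
    (hmerge : x (n + 1) = y (n + 1)) : False := by
  have hweven := wEven hu huw hmur
  have husize := uSize hu hmur
  have hpy : IsPartition (y n) := hy.1 n (by omega)
  have hnpar : n % 2 = 0 := by omega
  rw [hxe] at hxwo
  have hq : x n = addRow (y n) a := by rw [← hxe, hmerge, hya]
  have hqa : x n a = y n a + 1 := by rw [hq, addRow_self]
  have hqj : ∀ j, j ≠ a → x n j = y n j := fun j hj => by rw [hq, addRow_of_ne _ hj]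
  have hpsxy : psize (x n) = psize (y n) + 1 := by rw [hq, psize_addRow hpy]
  have hbx : psize (x n) ≤ (n + 1) / 2 := sizeBound hx n (by omega)
  have hun : psize (u n) = (n + 1) / 2 := husize n (by omega)
  have hPux : PP δ u x n := invP hu huw hx hxw hweven n (by omega)
  have hPuy : PP δ u y n := invP hu huw hy hyw hweven n (by omega)
  rcases hPux with hueq | ⟨k2, B1, B2, B3, B4⟩ | ⟨k2, hsr⟩
  · -- u n = x n : use the clash lemma
    obtain ⟨ju, hjadd, hjw⟩ := uOdd hu huw hmur (n + 1) hn hpar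
    rw [Nat.add_sub_cancel] at hjadd hjw
    have hpu1 : IsPartition (u (n + 1)) := hu.1 _ hn
    have hadd : addRow (x n) ju = u (n + 1) := by rw [← hueq, ← hjadd]
    have huxj : u n ju = x n ju := by rw [hueq]
    have hcc : (x n ju : ℤ) - ju = (y n a : ℤ) - a := by omega
    exact clash (hx.1 n (by omega)) hpy hq (hadd ▸ hpu1) hcc
  · -- SR u x n k2 : the main case
    rcases hPuy with hueq | ⟨k3, D1, D2, D3, D4⟩ | ⟨k3, hsr⟩
    · -- u n = y n : sizes contradict
      have : psize (u n) = psize (y n) := by rw [hueq]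
      omega
    · -- SR u y n k3
      have hk2a : k2 = a := by
        by_cases hk2a : k2 = a
        · exact hk2a
        · exfalso
          have hxy2 : x n k2 = y n k2 := hqj k2 hk2a
          have hk2k3 : k2 = k3 := by
            by_contra hcon
            have := D1 k2 hcon
            omega
          have ha3 : a = k3 := by
            by_contra hcon
            have h1 := D1 a hcon
            have h2 := B1 a (fun h => hk2a h.symm)
            omega
          exact hk2a (hk2k3.trans ha3.symm)
      subst hk2a
      -- bottom content of u∖x pins x's row-end, contradicting the stay equation
      have e1 : (x n k2 : ℤ) - k2 = δ - (psize (u n) : ℤ) := by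
        rw [B3, hnpar]
        push_cast
        ring
      omega
    · -- SR y u n k3 : y bigger than u, impossible
      obtain ⟨C1, C2, C3, C4⟩ := hsr
      have h3 := sizeBound hy n (by omega)
      omega
  · -- SR x u n k2 : x bigger than u, impossible
    obtain ⟨C1, C2, C3, C4⟩ := hsr
    omega

lemma backStep {δ : ℤ} {w : ℕ → ℤ} {r : ℕ} {u t t' : ℕ → ℕ → ℕ}
    {mu lam lam' : ℕ → ℕ}
    (hu : IsVacTab r u mu) (huw : HasWeight δ r u w) (hmur : psize mu = r)
    (ht : IsVacTab r t lam) (htw : HasWeight δ r t w)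
    (ht' : IsVacTab r t' lam') (ht'w : HasWeight δ r t' w) :
    ∀ n, n + 1 < 2 * r → t (n + 1) = t' (n + 1) → t n = t' n := by
  have hweven := wEven hu huw hmur
  intro n hn heq
  by_contra hne
  have hpt : IsPartition (t n) := ht.1 n (by omega)
  have hpt' : IsPartition (t' n) := ht'.1 n (by omega)
  have hpt1 : IsPartition (t (n + 1)) := ht.1 _ hn
  rcases Nat.even_or_odd (n + 1) with he | ho
  · -- even step
    have hpar : (n + 1) % 2 = 0 := Nat.even_iff.mp he
    have hT := (htw (n + 1) (by omega) hn).2 hpar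
    have hT' := (ht'w (n + 1) (by omega) hn).2 hpar
    rw [Nat.add_sub_cancel] at hT hT'
    have hw2 : w (n + 1) = (((n + 1) / 2 : ℕ) : ℤ) := hweven (n + 1) (by omega) hn hpar
    rcases hT with ⟨hte, htwe⟩ | ⟨a, hta, htwa⟩ <;>
      rcases hT' with ⟨ht'e, ht'we⟩ | ⟨b, ht'b, ht'wb⟩
    · exact hne (hte.symm.trans (heq.trans ht'e))
    · -- t stays, t' removes
      have hpt'1 : IsPartition (t' (n + 1)) := ht'.1 _ hn
      have h1 : psize (t' n) = psize (t (n + 1)) + 1 := by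
        rw [ht'b, psize_addRow hpt'1, heq]
      have h2 : psize (t (n + 1)) = (n + 1) / 2 := by omega
      have h3 := sizeBound ht' n (by omega)
      omega
    · -- t removes, t' stays
      have h1 : psize (t n) = psize (t (n + 1)) + 1 := by
        rw [hta, psize_addRow hpt1]
      have h2 : psize (t' (n + 1)) = psize (t (n + 1)) := by rw [heq]
      have h3 := sizeBound ht n (by omega)
      omega
    · -- both remove
      have hE : ∀ j, t (n + 1) j = t' (n + 1) j := fun j => by rw [heq]
      have h1 := hE a
      have h2 := hE b
      have hcc : (t (n + 1) a : ℤ) - a = (t (n + 1) b : ℤ) - b := by omega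
      have hab : a = b := contentInj hpt1 hcc
      subst hab
      exact hne (by rw [hta, ht'b, heq])
  · -- odd step
    have hpar : (n + 1) % 2 = 1 := Nat.odd_iff.mp ho
    have hT := (htw (n + 1) (by omega) hn).1 hpar
    have hT' := (ht'w (n + 1) (by omega) hn).1 hpar
    rw [Nat.add_sub_cancel] at hT hT'
    rcases hT with ⟨hte, htwo⟩ | ⟨a, hta, htwa⟩ <;>
      rcases hT' with ⟨ht'e, ht'wo⟩ | ⟨b, ht'b, ht'wb⟩
    · exact hne (hte.symm.trans (heq.trans ht'e))
    · -- t stays, t' adds : merge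
      exact mergeOddFalse hu huw hmur ht htw ht' ht'w hn hpar hne hte htwo ht'b
        ht'wb heq
    · -- t adds, t' stays : merge (swapped)
      exact mergeOddFalse hu huw hmur ht' ht'w ht htw hn hpar
        (fun h => hne h.symm) ht'e ht'wo hta htwa heq.symm
    · -- both add
      have hE : ∀ j, t (n + 1) j = t' (n + 1) j := fun j => by rw [heq]
      by_cases hab : a = b
      · subst hab
        have : addRow (t n) a = addRow (t' n) a := by rw [← hta, ← ht'b, heq]
        exact hne (addRow_left_cancel this)
      · have hva : t (n + 1) a = t n a + 1 := by rw [hta, addRow_self]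
        have hvj : ∀ j, j ≠ a → t (n + 1) j = t n j := fun j hj => by
          rw [hta, addRow_of_ne _ hj]
        have hv'b : t' (n + 1) b = t' n b + 1 := by rw [ht'b, addRow_self]
        have hv'j : ∀ j, j ≠ b → t' (n + 1) j = t' n j := fun j hj => by
          rw [ht'b, addRow_of_ne _ hj]
        have h1 := hE a
        have h2 := hE b
        have h3 := hvj b (fun h => hab h.symm)
        have h4 := hv'j a hab
        -- t n b - b = w + 1 > w = t n a - a forces b < a; symmetric for t' forces a < b
        have hba : b < a := by
          rcases Nat.lt_trichotomy a b with h | h | h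
          · have := hpt.1 h.le
            omega
          · exact absurd h hab
          · exact h
        have hab' : a < b := by
          rcases Nat.lt_trichotomy a b with h | h | h
          · exact h
          · exact absurd h hab
          · have := hpt'.1 h.le
            omega
        omega

/-- For `μ` a partition of `r` and `λ` a partition with `|λ| ≤ r`: for every
vacillating tableau `u` of shape `μ` there is at most one vacillating tableau
of shape `λ` with the same weight vector as `u`. -/
theorem at_most_one_tableau_of_common_weight (δ : ℤ) (r : ℕ) (hr : 1 ≤ r)
    (lam mu : ℕ → ℕ) (hlam : IsPartition lam) (hmu : IsPartition mu)
    (hmur : psize mu = r) (hlamr : psize lam ≤ r)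
    (u : ℕ → ℕ → ℕ) (w : ℕ → ℤ) (hu : IsVacTab r u mu) (huw : HasWeight δ r u w)
    (t t' : ℕ → ℕ → ℕ)
    (ht : IsVacTab r t lam) (htw : HasWeight δ r t w)
    (ht' : IsVacTab r t' lam) (ht'w : HasWeight δ r t' w) :
    t = t' := by
  have main : ∀ k n, n + k = 2 * r - 1 → t n = t' n := by
    intro k
    induction k with
    | zero =>
      intro n hk
      have hn : n = 2 * r - 1 := by omega
      subst hn
      rw [ht.2.2.1, ht'.2.2.1]
    | succ k ih =>
      intro n hk
      have h1 : t (n + 1) = t' (n + 1) := ih (n + 1) (by omega)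
      exact backStep hu huw hmur ht htw ht' ht'w n (by omega) h1
  funext m
  by_cases hm : m < 2 * r
  · exact main (2 * r - 1 - m) m (by omega)
  · rw [ht.2.2.2.2.2 m (by omega), ht'.2.2.2.2.2 m (by omega)]
end
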